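/- arXiv:2103.12889 — 3 statements merged into one kernel-verified Lean document; each statement's English description precedes it below -/
import Mathlib

section
/- For all m≥1, the sequence c defined by c(0)=0 and c(m)=2·2^m−1+Σ_{k=1}^{m-1}c(k)·C(m+1,m−k) satisfies the closed form c(m)=Σ_{k=0}^{m-1}(2·2^{m−k}−1)·C(m+1,k)·B_k, where B_k is the k-th ordered Bell number (Fubini number). -/
/-!
For any weight `w`, the sum `d m = ∑_{k<m} w (m - k) * C(m+1, k) * B k` satisfies the
recurrence of `c` with `w m` in place of `2 * 2 ^ m - 1`, so `c = d` by strong induction.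
Indeed, inserting the formula for `d j` into `∑_{j<m} d j * C(m+1, m-j)` gives a sum over
`i < j < m`; the reflection `j ↦ m + i - j` together with
`C(m+1, m-j) * C(j+1, i) = C(m+1, m-j+i) * C(m-j+i, i)` turns it into
`∑_{k<m} w (m - k) * C(m+1, k) * ∑_{i<k} C(k, i) * B i`, and for `k ≥ 1` the inner sum is
`B k` by the recurrence of the ordered Bell numbers.
-/

open Finset

theorem Nat.add_choose_add_mul_choose (a b i : ℕ) :
    (a + b).choose (a + i) * (a + i).choose i = b.choose i * (a + b).choose a := by
  rw [← Nat.choose_symm_add, Nat.choose_mul (Nat.le_add_right a i), Nat.add_sub_cancel_left,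
    Nat.add_sub_cancel_left, mul_comm]

theorem sum_Icc_choose_mul_sub_eq_sum_range {R : Type*} [Semiring R] (B : ℕ → R) (n : ℕ) :
    ∑ k ∈ Icc 1 n, (n.choose k : R) * B (n - k) = ∑ i ∈ range n, (n.choose i : R) * B i := by
  refine sum_nbij' (n - ·) (n - ·) ?_ ?_ ?_ ?_ ?_ <;> intro k hk <;>
    simp only [mem_Icc, mem_range] at hk ⊢
  any_goals omega
  rw [Nat.choose_symm hk.2]

section WeightedBellSum

variable {R : Type*} [CommRing R] (w B : ℕ → R)

def weightedBellSum (m : ℕ) : R :=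
  ∑ k ∈ range m, w (m - k) * (m + 1).choose k * B k

theorem sum_weightedBellSum_mul_choose (m : ℕ) :
    ∑ j ∈ range m, weightedBellSum w B j * (m + 1).choose (m - j) =
      ∑ k ∈ range m, w (m - k) * (m + 1).choose k * ∑ i ∈ range k, k.choose i * B i := by
  simp only [weightedBellSum, sum_mul, mul_sum]
  rw [sum_sigma', sum_sigma']
  refine sum_nbij' (fun p => ⟨m + p.2 - p.1, p.2⟩) (fun p => ⟨m + p.2 - p.1, p.2⟩)
    ?_ ?_ ?_ ?_ ?_ <;> rintro ⟨j, i⟩ hp <;>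
    simp only [mem_sigma, mem_range, Sigma.mk.inj_iff, heq_eq_eq, and_true] at hp ⊢
  any_goals omega
  have hchoose : ((m + 1).choose (m + i - j) : R) * (m + i - j).choose i =
      (j + 1).choose i * (m + 1).choose (m - j) := by
    have := Nat.add_choose_add_mul_choose (m - j) (j + 1) i
    rw [show m - j + (j + 1) = m + 1 by omega, show m - j + i = m + i - j by omega] at this
    exact_mod_cast congrArg (Nat.cast : ℕ → R) this
  rw [show m - (m + i - j) = j - i by omega]
  linear_combination -w (j - i) * B i * hchoose

theorem weightedBellSum_eq_add_sum_mul_choose (hB0 : B 0 = 1)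
    (hB : ∀ n, 1 ≤ n → B n = ∑ k ∈ Icc 1 n, (n.choose k : R) * B (n - k)) {m : ℕ} (hm : 1 ≤ m) :
    weightedBellSum w B m =
      w m + ∑ k ∈ Icc 1 (m - 1), weightedBellSum w B k * (m + 1).choose (m - k) := by
  have hsplit (f : ℕ → R) : ∑ k ∈ range m, f k = f 0 + ∑ k ∈ Icc 1 (m - 1), f k := by
    rw [sum_range_eq_add_Ico _ hm, Icc_sub_one_right_eq_Ico_of_not_isMin
      (by simpa using Nat.one_le_iff_ne_zero.1 hm)]
  calc weightedBellSum w B m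
      = w m + ∑ k ∈ Icc 1 (m - 1), w (m - k) * (m + 1).choose k * B k := by
        simp [weightedBellSum, hsplit, hB0]
    _ = w m + ∑ k ∈ Icc 1 (m - 1),
          w (m - k) * (m + 1).choose k * ∑ i ∈ range k, k.choose i * B i := by
        congr 1
        refine sum_congr rfl fun k hk => ?_
        rw [hB k (mem_Icc.1 hk).1, sum_Icc_choose_mul_sub_eq_sum_range]
    _ = w m + ∑ j ∈ range m, weightedBellSum w B j * (m + 1).choose (m - j) := by
        rw [sum_weightedBellSum_mul_choose, hsplit]
        simp
    _ = w m + ∑ k ∈ Icc 1 (m - 1), weightedBellSum w B k * (m + 1).choose (m - k) := by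
        rw [hsplit]
        simp [weightedBellSum]

end WeightedBellSum

theorem c_closed_form_general (c B : ℕ → ℤ)
    (hB0 : B 0 = 1)
    (hB : ∀ n, 1 ≤ n → B n = ∑ k ∈ Finset.Icc 1 n, (n.choose k : ℤ) * B (n - k))
    (hc : ∀ m, 1 ≤ m →
      c m = 2 * 2 ^ m - 1 +
        ∑ k ∈ Finset.Icc 1 (m - 1), c k * ((m + 1).choose (m - k) : ℤ)) :
    ∀ m, 1 ≤ m →
      c m = ∑ k ∈ Finset.range m, (2 * 2 ^ (m - k) - 1) * ((m + 1).choose k : ℤ) * B k := by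
  intro m
  induction m using Nat.strong_induction_on with
  | _ m ih =>
    intro hm
    change c m = weightedBellSum (fun n => 2 * 2 ^ n - 1) B m
    rw [hc m hm, weightedBellSum_eq_add_sum_mul_choose _ B hB0 hB hm]
    congr 1
    refine sum_congr rfl fun k hk => ?_
    obtain ⟨hk1, hkm⟩ := mem_Icc.1 hk
    rw [ih k (by omega) hk1, weightedBellSum]

/-- Closed form of c in terms of the ordered Bell (Fubini) numbers B:
c(m) = Σ_{k=0}^{m-1} (2·2^{m−k}−1)·C(m+1,k)·B_k for m ≥ 1. -/
theorem c_closed_form (c B : ℕ → ℤ)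
    (hB0 : B 0 = 1)
    (hB : ∀ n, 1 ≤ n → B n = ∑ k ∈ Finset.Icc 1 n, (n.choose k : ℤ) * B (n - k))
    (hc0 : c 0 = 0)
    (hc : ∀ m, 1 ≤ m →
      c m = 2 * 2 ^ m - 1 +
        ∑ k ∈ Finset.Icc 1 (m - 1), c k * ((m + 1).choose (m - k) : ℤ)) :
    ∀ m, 1 ≤ m →
      c m = ∑ k ∈ Finset.range m, (2 * 2 ^ (m - k) - 1) * ((m + 1).choose k : ℤ) * B k :=
  c_closed_form_general c B hB0 hB hc
end

section
/- For all m≥1, the sequence γ defined by γ(0)=0 and γ(m)=2^m(m+1)+Σ_{k=1}^{m-1}γ(k)·C(m+1,m−k) satisfies the closed form γ(m)=Σ_{k=0}^{m-1} 2^{m−k}·(m−k+1)·C(m+1,k)·B_k, where B_k is the k-th ordered Bell number. -/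
/-!
Write `F a m = ∑_{k<m} a(m-k) C(m+1,k) B_k`. Expanding `B_k` (`k ≥ 1`) by its recurrence and
swapping the two sums, `F a m - a m` becomes `∑_{l<m} B_l ∑_{l<k<m} a(m-k) C(m+1,k) C(k,l)`.
Expanding `∑_{1≤k<m} F a k C(m+1,m-k)` the same way gives the same double sum, up to the
reflection `k ↦ m+l-k` of the inner index, which turns one trinomial coefficient
`C(m+1,k) C(k,l)` into the other `C(m+1,m-k) C(k+1,l)`. So `F a` satisfies the recurrence of `γ`
with `a d = 2^d (d+1)`, and a solution of that recurrence is determined by `a`.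
-/

open Finset

namespace OrderedBell

variable {R : Type*} [CommSemiring R]

theorem choose_mul_choose_reflect {m l k : ℕ} (hlk : l ≤ k) (hkm : k ≤ m) :
    (m + 1).choose (m + l - k) * (m + l - k).choose l =
      (m + 1).choose (m - k) * (k + 1).choose l := by
  rw [Nat.choose_mul (by omega),
    Nat.choose_symm_of_eq_add (by omega : m + 1 = (m - k) + (k + 1)), Nat.choose_mul (by omega),
    Nat.choose_symm_of_eq_add (by omega : m + 1 - l = (m + l - k - l) + (k + 1 - l))]

theorem sum_Ico_one_sum_range_comm (m : ℕ) (f : ℕ → ℕ → R) :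
    ∑ k ∈ Ico 1 m, ∑ l ∈ range k, f k l = ∑ l ∈ range m, ∑ k ∈ Ioo l m, f k l :=
  sum_comm' fun k l => by simp only [mem_Ico, mem_range, mem_Ioo]; omega

theorem sum_Icc_choose_mul_eq_sum_range (B : ℕ → R) (k : ℕ) :
    ∑ i ∈ Icc 1 k, (k.choose i : R) * B (k - i) =
      ∑ l ∈ range k, (k.choose l : R) * B l := by
  refine sum_nbij' (k - ·) (k - ·) ?_ ?_ ?_ ?_ ?_ <;> intro i hi <;>
    simp only [mem_Icc, mem_range] at hi
  · simp only [mem_range]; omega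
  · simp only [mem_Icc]; omega
  · omega
  · omega
  · rw [Nat.choose_symm hi.2]

/-- The closed form, with the weight `d ↦ 2^d (d+1)` replaced by an arbitrary `a`. -/
def closedForm (a B : ℕ → R) (m : ℕ) : R :=
  ∑ k ∈ range m, a (m - k) * ((m + 1).choose k : R) * B k

theorem closedForm_eq_add_sum (a B : ℕ → R) (hB0 : B 0 = 1)
    (hB : ∀ n, 1 ≤ n → B n = ∑ k ∈ Icc 1 n, (n.choose k : R) * B (n - k))
    {m : ℕ} (hm : 1 ≤ m) :
    closedForm a B m =
      a m + ∑ k ∈ Ico 1 m, closedForm a B k * ((m + 1).choose (m - k) : R) := by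
  have expand_bell : ∑ k ∈ Ico 1 m, a (m - k) * ((m + 1).choose k : R) * B k =
      ∑ l ∈ range m,
        ∑ k ∈ Ioo l m, a (m - k) * ((m + 1).choose k : R) * (k.choose l : R) * B l := by
    rw [← sum_Ico_one_sum_range_comm]
    refine sum_congr rfl fun k hk => ?_
    rw [hB k (mem_Ico.1 hk).1, sum_Icc_choose_mul_eq_sum_range, mul_sum]
    exact sum_congr rfl fun l _ => by ring
  have expand_closedForm : ∑ k ∈ Ico 1 m, closedForm a B k * ((m + 1).choose (m - k) : R) =
      ∑ l ∈ range m, ∑ k ∈ Ioo l m,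
        a (k - l) * ((k + 1).choose l : R) * ((m + 1).choose (m - k) : R) * B l := by
    rw [← sum_Ico_one_sum_range_comm]
    refine sum_congr rfl fun k _ => ?_
    rw [closedForm, sum_mul]
    exact sum_congr rfl fun l _ => by ring
  have reflect (l : ℕ) :
      ∑ k ∈ Ioo l m, a (k - l) * ((k + 1).choose l : R) * ((m + 1).choose (m - k) : R) * B l =
        ∑ k ∈ Ioo l m, a (m - k) * ((m + 1).choose k : R) * (k.choose l : R) * B l := by
    refine sum_nbij' (m + l - ·) (m + l - ·) ?_ ?_ ?_ ?_ ?_ <;> intro k hk <;>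
      simp only [mem_Ioo] at hk
    · simp only [mem_Ioo]; omega
    · simp only [mem_Ioo]; omega
    · omega
    · omega
    · have hsub : m - (m + l - k) = k - l := by omega
      rw [hsub, mul_assoc (a (k - l)) ((m + 1).choose (m + l - k) : R), ← Nat.cast_mul,
        choose_mul_choose_reflect (by omega) (by omega), Nat.cast_mul]
      ring
  rw [closedForm, sum_range_eq_add_Ico _ (by omega), expand_bell, expand_closedForm]
  simp only [Nat.sub_zero, Nat.choose_zero_right, Nat.cast_one, mul_one, hB0, reflect]

theorem eq_of_recurrence (a : ℕ → R) (c : ℕ → ℕ → R) {x y : ℕ → R}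
    (hx : ∀ m, 1 ≤ m → x m = a m + ∑ k ∈ Ico 1 m, x k * c m k)
    (hy : ∀ m, 1 ≤ m → y m = a m + ∑ k ∈ Ico 1 m, y k * c m k) :
    ∀ m, 1 ≤ m → x m = y m := by
  intro m
  induction m using Nat.strong_induction_on with
  | _ m ih =>
    intro hm
    rw [hx m hm, hy m hm]
    congr 1
    exact sum_congr rfl fun k hk => by rw [ih k (mem_Ico.1 hk).2 (mem_Ico.1 hk).1]

end OrderedBell

theorem gamma_closed_form_general (γ B : ℕ → ℤ)
    (hB0 : B 0 = 1)
    (hB : ∀ n, 1 ≤ n → B n = ∑ k ∈ Finset.Icc 1 n, (n.choose k : ℤ) * B (n - k))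
    (hγ : ∀ m, 1 ≤ m →
      γ m = 2 ^ m * (m + 1) +
        ∑ k ∈ Finset.Icc 1 (m - 1), γ k * ((m + 1).choose (m - k) : ℤ)) :
    ∀ m, 1 ≤ m →
      γ m = ∑ k ∈ Finset.range m,
        2 ^ (m - k) * ((m : ℤ) - k + 1) * ((m + 1).choose k : ℤ) * B k := by
  set a : ℕ → ℤ := fun d => 2 ^ d * (d + 1)
  have hγ' : ∀ m, 1 ≤ m →
      γ m = a m + ∑ k ∈ Ico 1 m, γ k * ((m + 1).choose (m - k) : ℤ) := by
    intro m hm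
    rw [hγ m hm, ← Ico_add_one_right_eq_Icc, Nat.sub_add_cancel hm]
  intro m hm
  rw [OrderedBell.eq_of_recurrence a _ hγ'
    (fun _ => OrderedBell.closedForm_eq_add_sum a B hB0 hB) m hm, OrderedBell.closedForm]
  refine sum_congr rfl fun k hk => ?_
  simp only [a, Nat.cast_sub (mem_range.1 hk).le]

/-- Closed form of γ in terms of the ordered Bell (Fubini) numbers B:
γ(m) = Σ_{k=0}^{m-1} 2^{m−k}·(m−k+1)·C(m+1,k)·B_k for m ≥ 1. -/
theorem gamma_closed_form (γ B : ℕ → ℤ)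
    (hB0 : B 0 = 1)
    (hB : ∀ n, 1 ≤ n → B n = ∑ k ∈ Finset.Icc 1 n, (n.choose k : ℤ) * B (n - k))
    (hγ0 : γ 0 = 0)
    (hγ : ∀ m, 1 ≤ m →
      γ m = 2 ^ m * (m + 1) +
        ∑ k ∈ Finset.Icc 1 (m - 1), γ k * ((m + 1).choose (m - k) : ℤ)) :
    ∀ m, 1 ≤ m →
      γ m = ∑ k ∈ Finset.range m,
        2 ^ (m - k) * ((m : ℤ) - k + 1) * ((m + 1).choose k : ℤ) * B k :=
  gamma_closed_form_general γ B hB0 hB hγ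
end

section
/- In the bar complex of a group H, let f,g,h,k: G → H be homomorphisms, ℓ ∈ H with ℓ·f(x)·g(x)=h(x)·k(x)·ℓ for all x, f,g commuting, h,k commuting, and m(x)=h(x)⁻¹·ℓ·f(x). For g₁ ∈ G define P₁([g₁]) := [ℓ, f(g₁)] − [h(g₁), m(g₁)] + [m(g₁), g(g₁)] − [k(g₁), ℓ] in ZBH₂. Then ∂P₁([g₁]) = ([f(g₁)]+[g(g₁)]) − ([h(g₁)]+[k(g₁)]), i.e., Ed_{(f,g)}([g₁]) − Ed_{(h,k)}([g₁]). -/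
/-- The i-th bar face map on (n+1)-tuples of group elements. -/
def barFace {G : Type*} [Group G] {n : ℕ} (i : Fin (n + 2)) (g : Fin (n + 1) → G) :
    Fin n → G :=
  Fin.cases (fun k => g k.succ) (fun j => Fin.contractNth j (· * ·) g) i

/-- The boundary operator ∂ = Σ (−1)^i d_i of the Moore (bar) complex ZBH_*. -/
noncomputable def barBoundary (H : Type*) [Group H] (n : ℕ) :
    FreeAbelianGroup (Fin (n + 1) → H) →+ FreeAbelianGroup (Fin n → H) :=
  FreeAbelianGroup.lift fun g =>
    ∑ i : Fin (n + 2), (-1 : ℤ) ^ (i : ℕ) • FreeAbelianGroup.of (barFace i g)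

theorem bd_pair' {H : Type*} [Group H] (a b : H) :
    barBoundary H 1 (FreeAbelianGroup.of ![a, b]) =
      FreeAbelianGroup.of ![b] - FreeAbelianGroup.of ![a * b] + FreeAbelianGroup.of ![a] := by
  rw [barBoundary, FreeAbelianGroup.lift_apply_of]
  have e0 : barFace (0 : Fin 3) ![a, b] = ![b] := by
    funext i; fin_cases i; rfl
  have e1 : barFace (1 : Fin 3) ![a, b] = ![a * b] := by
    funext i; fin_cases i; rfl
  have e2 : barFace (2 : Fin 3) ![a, b] = ![a] := by
    funext i; fin_cases i; rfl
  rw [Fin.sum_univ_three, e0, e1, e2]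
  simp
  abel

/-- For P₁([g₁]) = [ℓ, f(g₁)] − [h(g₁), m(g₁)] + [m(g₁), g(g₁)] − [k(g₁), ℓ], its
bar boundary is Ed_{(f,g)}([g₁]) − Ed_{(h,k)}([g₁]) = ([f g₁]+[g g₁]) − ([h g₁]+[k g₁]). -/
theorem P1_boundary {G H : Type*} [Group G] [Group H] (f g h k : G →* H) (ℓ : H)
    (hfg : ∀ x y : G, f x * g y = g y * f x)
    (hhk : ∀ x y : G, h x * k y = k y * h x)
    (hrel : ∀ x : G, ℓ * f x * g x = h x * k x * ℓ)
    (m : G → H) (hm : ∀ x : G, m x = (h x)⁻¹ * ℓ * f x) (g₁ : G) :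
    barBoundary H 1
        (FreeAbelianGroup.of ![ℓ, f g₁] - FreeAbelianGroup.of ![h g₁, m g₁]
          + FreeAbelianGroup.of ![m g₁, g g₁] - FreeAbelianGroup.of ![k g₁, ℓ]) =
      (FreeAbelianGroup.of ![f g₁] + FreeAbelianGroup.of ![g g₁]) -
        (FreeAbelianGroup.of ![h g₁] + FreeAbelianGroup.of ![k g₁]) := by
  have hm1 : h g₁ * m g₁ = ℓ * f g₁ := by
    rw [hm]; group
  have hm2 : m g₁ * g g₁ = k g₁ * ℓ := by
    rw [hm]
    have := hrel g₁
    calc (h g₁)⁻¹ * ℓ * f g₁ * g g₁ = (h g₁)⁻¹ * (ℓ * f g₁ * g g₁) := by group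
      _ = (h g₁)⁻¹ * (h g₁ * k g₁ * ℓ) := by rw [this]
      _ = k g₁ * ℓ := by group
  rw [map_sub, map_add, map_sub, bd_pair', bd_pair', bd_pair', bd_pair', hm1, hm2]
  abel
end
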